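/- arXiv:2108.01523 — 3 statements merged into one kernel-verified Lean document; each statement's English description precedes it below -/
import Mathlib

section
/- Let c ∈ ℝ and let the density g on (0,∞) satisfy g ∈ L¹((0,∞), x^{c−1}) and assumption [G1] with parameter γ > 0. Then for every r > max(0, γ^{−1} − 1) there exist constants c_{g,r}, C_{g,r} > 0 depending only on g and r such that for all k ≥ 1, c_{g,r} k^{2+1/γ} ≤ ∫_ℝ |R_k(t)|² dt ≤ C_{g,r} k^{2+1/γ}, where R_k := R_{k,0,r}. -/
open MeasureTheory Set Filter Finset
open scoped Real NNReal ENNReal Topology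

noncomputable section

namespace MultDeconv

/-- Multiplicative convolution of complex-valued functions on `(0,∞)`. -/
def mConv (h₁ h₂ : ℝ → ℂ) (y : ℝ) : ℂ :=
  ∫ x in Ioi (0 : ℝ), h₁ (y / x) * h₂ x / (x : ℂ)

/-- Multiplicative convolution of real-valued functions on `(0,∞)`. -/
def mConvR (h₁ h₂ : ℝ → ℝ) (y : ℝ) : ℝ :=
  ∫ x in Ioi (0 : ℝ), h₁ (y / x) * h₂ x / x

/-- Mellin transform at development point `c`. -/
def mellinT (c : ℝ) (h : ℝ → ℂ) (t : ℝ) : ℂ :=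
  ∫ x in Ioi (0 : ℝ), (x : ℂ) ^ ((c : ℂ) - 1 + (t : ℂ) * Complex.I) * h x

/-- `h ∈ L¹((0,∞), x^{c-1})`. -/
def MemL1w (c : ℝ) (h : ℝ → ℂ) : Prop :=
  IntegrableOn (fun x => h x * ((x ^ (c - 1) : ℝ) : ℂ)) (Ioi 0)

/-- the squared weighted L²-norm `‖h‖²_{x^{2c-1}}` -/
def wNormSq (c : ℝ) (h : ℝ → ℂ) : ℝ :=
  ∫ x in Ioi (0 : ℝ), ‖h x‖ ^ 2 * x ^ (2 * c - 1)

/-- `h ∈ L²((0,∞), x^{2c-1})`. -/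
def MemL2w (c : ℝ) (h : ℝ → ℂ) : Prop :=
  AEStronglyMeasurable h (volume.restrict (Ioi 0)) ∧
    IntegrableOn (fun x => ‖h x‖ ^ 2 * x ^ (2 * c - 1)) (Ioi 0)

/-- a probability density on `(0,∞)` -/
def IsDensity (f : ℝ → ℝ) : Prop :=
  Measurable f ∧ (∀ x, 0 ≤ f x) ∧ (∀ x, x ≤ 0 → f x = 0) ∧
    (∫ x in Ioi (0 : ℝ), f x) = 1

def toC (f : ℝ → ℝ) : ℝ → ℂ := fun x => (f x : ℂ)

/-- the ridge factor `R_{k,ξ,r}` -/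
def ridgeR (c : ℝ) (g : ℝ → ℝ) (r ξ k : ℝ) (t : ℝ) : ℂ :=
  mellinT c (toC g) (-t) * ((‖mellinT c (toC g) t‖ ^ r : ℝ) : ℂ) /
    (((max (‖mellinT c (toC g) t‖) (k⁻¹ * (1 + |t|) ^ ξ)) ^ (r + 2) : ℝ) : ℂ)

/-- the set `G_k` -/
def Gset (c : ℝ) (g : ℝ → ℝ) (ξ k : ℝ) : Set ℝ :=
  {t | k⁻¹ * (1 + |t|) ^ ξ > ‖mellinT c (toC g) t‖}

/-- the law of `Y = X·U`, whose density is the multiplicative convolution `f*g` -/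
def lawY (f g : ℝ → ℝ) : Measure ℝ :=
  (volume.restrict (Ioi 0)).withDensity fun y => ENNReal.ofReal (mConvR f g y)

/-- the joint law of the i.i.d. sample `Y₁,…,Y_n` -/
def sampleLaw (n : ℕ) (f g : ℝ → ℝ) : Measure (Fin n → ℝ) :=
  Measure.pi fun _ => lawY f g

/-- the empirical Mellin transform -/
def empMellin (c : ℝ) {n : ℕ} (y : Fin n → ℝ) (t : ℝ) : ℂ :=
  (n : ℂ)⁻¹ * ∑ j, ((y j : ℂ)) ^ ((c : ℂ) - 1 + (t : ℂ) * Complex.I)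

/-- the ridge estimator `f̂_{k,ξ,r}` -/
def ridgeEst (c : ℝ) (g : ℝ → ℝ) (r ξ k : ℝ) {n : ℕ} (y : Fin n → ℝ) (x : ℝ) : ℂ :=
  (((2 * π)⁻¹ : ℝ) : ℂ) *
    ∫ t : ℝ, (x : ℂ) ^ (-(c : ℂ) - (t : ℂ) * Complex.I) * empMellin c y t * ridgeR c g r ξ k t

/-- Assumption [G1] -/
def AssumptionG1 (c : ℝ) (g : ℝ → ℝ) (cg Cg γ : ℝ) : Prop :=
  0 < cg ∧ 0 < Cg ∧ 0 < γ ∧ ∀ t : ℝ,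
    cg * (1 + t ^ 2) ^ (-γ / 2) ≤ ‖mellinT c (toC g) t‖ ∧
      ‖mellinT c (toC g) t‖ ≤ Cg * (1 + t ^ 2) ^ (-γ / 2)

/-- the global risk of the ridge estimator -/
def riskRidge (c : ℝ) (f g : ℝ → ℝ) (r ξ k : ℝ) (n : ℕ) : ℝ :=
  ∫ y, wNormSq c (fun x => (f x : ℂ) - ridgeEst c g r ξ k y x) ∂(sampleLaw n f g)

/-- `‖R_{k,ξ,r}‖²_{L²(ℝ)}` -/
def RnormSq (c : ℝ) (g : ℝ → ℝ) (r ξ k : ℝ) : ℝ :=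
  ∫ t : ℝ, ‖ridgeR c g r ξ k t‖ ^ 2

/-- `σ_c = E(Y₁^{2(c-1)})` -/
def sigmaC (c : ℝ) (f g : ℝ → ℝ) : ℝ := ∫ y, y ^ (2 * (c - 1)) ∂(lawY f g)

/-- the function `t ↦ |M_c[g](t)|^{r+1}(1+|t|)^{-ξ(r+2)}` -/
def ridgeIntegrand (c : ℝ) (g : ℝ → ℝ) (r ξ : ℝ) (t : ℝ) : ℝ :=
  ‖mellinT c (toC g) t‖ ^ (r + 1) * (1 + |t|) ^ (-(ξ * (r + 2)))

/-- Mellin--Sobolev ellipsoid `𝔻^s_c(L)` -/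
def MemSobolevD (c s L : ℝ) (f : ℝ → ℝ) : Prop :=
  IsDensity f ∧ MemL1w c (toC f) ∧ MemL2w c (toC f) ∧
    Integrable (fun t : ℝ => (1 + t ^ 2) ^ s * ‖mellinT c (toC f) t‖ ^ 2) ∧
    (∫ t : ℝ, (1 + t ^ 2) ^ s * ‖mellinT c (toC f) t‖ ^ 2) ≤ L ∧
    IntegrableOn (fun x => x ^ (2 * (c - 1)) * f x) (Ioi 0) ∧
    (∫ x in Ioi (0 : ℝ), x ^ (2 * (c - 1)) * f x) ≤ L

/-- the collection `𝒦_n` of admissible ridge parameters -/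
def Kn (c : ℝ) (g : ℝ → ℝ) (r : ℝ) (n : ℕ) : Set ℕ :=
  {k | 1 ≤ k ∧ RnormSq c g r 0 (k : ℝ) ≤ (n : ℝ)}

/-- empirical second-moment estimator `σ̂_c` -/
def sigmaHat (c : ℝ) {n : ℕ} (y : Fin n → ℝ) : ℝ :=
  (n : ℝ)⁻¹ * ∑ j, (y j) ^ (2 * (c - 1))

/-- empirical penalty `V̂(k)` -/
def Vhat (c : ℝ) (g : ℝ → ℝ) (r : ℝ) {n : ℕ} (y : Fin n → ℝ) (k : ℕ) : ℝ :=
  2 * sigmaHat c y * RnormSq c g r 0 (k : ℝ) / (n : ℝ)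

/-- deterministic penalty `V(k)` -/
def Vfun (c : ℝ) (f g : ℝ → ℝ) (r : ℝ) (n : ℕ) (k : ℕ) : ℝ :=
  sigmaC c f g * RnormSq c g r 0 (k : ℝ) / (n : ℝ)

/-- comparison term `Â(k)` of the Goldenshluger--Lepski method -/
def Ahat (c : ℝ) (g : ℝ → ℝ) (r χ₁ : ℝ) (n : ℕ) (y : Fin n → ℝ) (k : ℕ) : ℝ :=
  ⨆ k' ∈ Kn c g r n,
    max (wNormSq c (fun x => ridgeEst c g r 0 ((k' : ℕ) : ℝ) y x -
            ridgeEst c g r 0 (((min k' k : ℕ)) : ℝ) y x) - χ₁ * Vhat c g r y k') 0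

/-- `k̂` is a minimiser of `Â + χ₂ V̂` over `𝒦_n` -/
def IsGLMinimiser (c : ℝ) (g : ℝ → ℝ) (r χ₁ χ₂ : ℝ) (n : ℕ)
    (khat : (Fin n → ℝ) → ℕ) : Prop :=
  ∀ y : Fin n → ℝ, khat y ∈ Kn c g r n ∧ ∀ k ∈ Kn c g r n,
    Ahat c g r χ₁ n y (khat y) + χ₂ * Vhat c g r y (khat y) ≤
      Ahat c g r χ₁ n y k + χ₂ * Vhat c g r y k

/-!
Under [G1], `|M_c[g](t)|` is comparable to `w(t) = (1 + t²)^{-γ/2}`, so `|R_k(t)|` is squeezed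
between constant multiples of profiles `w^{r+1} / max(a w, k⁻¹)^{r+2}`. Such a profile is at most
`a^{-(r+2)} w⁻¹` everywhere, and at most `k^{r+2} w^{r+1}` with equality once `a w ≤ k⁻¹`, which
holds for `t ≳ k^{1/γ}`. Cutting `ℝ` at `T = k^{1/γ}`, the first bound contributes
`T · T^{2γ} = k^{2+1/γ}` on `[-T, T]` and the second contributes
`k^{2(r+2)} T^{1-2γ(r+1)} = k^{2+1/γ}` on the tails, which converge because `2γ(r+1) > 1`;
the tail `(T, ∞)` alone gives the matching lower bound.
-/

theorem integrable_one_add_sq_rpow_neg {q : ℝ} (hq : 1 < 2 * q) :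
    Integrable fun t : ℝ => (1 + t ^ 2) ^ (-q) := by
  have h := integrable_rpow_neg_one_add_norm_sq (E := ℝ) (μ := volume) (r := 2 * q)
    (by simpa using hq)
  have hexp : -(2 * q) / 2 = -q := by ring
  simpa [Real.norm_eq_abs, sq_abs, hexp] using h

theorem integral_Ioi_rpow_neg {p T : ℝ} (hp : 1 < p) (hT : 0 < T) :
    ∫ t in Ioi T, t ^ (-p) = T ^ (1 - p) / (p - 1) := by
  rw [integral_Ioi_rpow_of_lt (by linarith) hT, show -p + 1 = -(p - 1) by ring,
    show 1 - p = -(p - 1) by ring, div_neg, neg_div, neg_neg]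

theorem integral_Ioi_one_add_sq_rpow_neg_le {q T : ℝ} (hq : 1 < 2 * q) (hT : 0 < T) :
    ∫ t in Ioi T, (1 + t ^ 2) ^ (-q) ≤ T ^ (1 - 2 * q) / (2 * q - 1) := by
  rw [← integral_Ioi_rpow_neg hq hT]
  refine setIntegral_mono_on (integrable_one_add_sq_rpow_neg hq).integrableOn
    (integrableOn_Ioi_rpow_of_lt (by linarith) hT) measurableSet_Ioi fun t ht => ?_
  have ht : 0 < t := hT.trans ht
  calc (1 + t ^ 2) ^ (-q) ≤ (t ^ 2) ^ (-q) :=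
        Real.rpow_le_rpow_of_nonpos (by positivity) (by linarith) (by linarith)
    _ = t ^ (-(2 * q)) := by rw [← Real.rpow_natCast, ← Real.rpow_mul ht.le]; ring_nf

theorem le_integral_Ioi_one_add_sq_rpow_neg {q T : ℝ} (hq : 1 < 2 * q) (hT : 1 ≤ T) :
    2 ^ (-q) * (T ^ (1 - 2 * q) / (2 * q - 1)) ≤ ∫ t in Ioi T, (1 + t ^ 2) ^ (-q) := by
  have hT0 : 0 < T := by linarith
  rw [← integral_Ioi_rpow_neg hq hT0, ← integral_const_mul]
  refine setIntegral_mono_on ((integrableOn_Ioi_rpow_of_lt (by linarith) hT0).const_mul _)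
    (integrable_one_add_sq_rpow_neg hq).integrableOn measurableSet_Ioi fun t ht => ?_
  have ht : 1 < t := hT.trans_lt ht
  calc 2 ^ (-q) * t ^ (-(2 * q)) = (2 * t ^ 2) ^ (-q) := by
        rw [Real.mul_rpow zero_le_two (by positivity), ← Real.rpow_natCast,
          ← Real.rpow_mul (by linarith)]
        ring_nf
    _ ≤ (1 + t ^ 2) ^ (-q) :=
        Real.rpow_le_rpow_of_nonpos (by positivity) (by nlinarith) (by linarith)

theorem integral_compl_Ioc_one_add_sq_rpow_neg_le {q T : ℝ} (hq : 1 < 2 * q) (hT : 0 < T) :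
    ∫ t in (Ioc (-T) T)ᶜ, (1 + t ^ 2) ^ (-q) ≤ 2 * (T ^ (1 - 2 * q) / (2 * q - 1)) := by
  have hint := integrable_one_add_sq_rpow_neg hq
  have hsymm : ∫ t in Iic (-T), (1 + t ^ 2) ^ (-q) = ∫ t in Ioi T, (1 + t ^ 2) ^ (-q) := by
    simp only [← integral_comp_neg_Ioi, neg_sq]
  rw [compl_Ioc, setIntegral_union (Iic_disjoint_Ioi (by linarith)) measurableSet_Ioi
    hint.integrableOn hint.integrableOn, hsymm, ← two_mul]
  exact mul_le_mul_of_nonneg_left (integral_Ioi_one_add_sq_rpow_neg_le hq hT) zero_le_two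

theorem integral_le_of_le_one_add_sq_rpow {f : ℝ → ℝ} {A K γ q T : ℝ} (hf : Integrable f)
    (hA : 0 ≤ A) (hK : 0 ≤ K) (hγ : 0 ≤ γ) (hq : 1 < 2 * q) (hT : 0 < T)
    (h_near : ∀ t, f t ≤ A * (1 + t ^ 2) ^ γ) (h_far : ∀ t, f t ≤ K * (1 + t ^ 2) ^ (-q)) :
    ∫ t, f t ≤ 2 * T * (A * (1 + T ^ 2) ^ γ) + K * (2 * (T ^ (1 - 2 * q) / (2 * q - 1))) := by
  rw [← integral_add_compl (measurableSet_Ioc (a := -T) (b := T)) hf]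
  gcongr
  · calc ∫ t in Ioc (-T) T, f t ≤ ∫ _ in Ioc (-T) T, A * (1 + T ^ 2) ^ γ :=
          setIntegral_mono_on hf.integrableOn (integrableOn_const measure_Ioc_lt_top.ne)
            measurableSet_Ioc fun t ht => (h_near t).trans <|
              mul_le_mul_of_nonneg_left
                (Real.rpow_le_rpow (by positivity) (by nlinarith [ht.1, ht.2]) hγ) hA
      _ = 2 * T * (A * (1 + T ^ 2) ^ γ) := by
          rw [setIntegral_const, smul_eq_mul, Real.volume_real_Ioc_of_le (by linarith)]
          ring
  · calc ∫ t in (Ioc (-T) T)ᶜ, f t ≤ ∫ t in (Ioc (-T) T)ᶜ, K * (1 + t ^ 2) ^ (-q) :=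
          setIntegral_mono_on hf.integrableOn
            ((integrable_one_add_sq_rpow_neg hq).const_mul K).integrableOn
            measurableSet_Ioc.compl fun t _ => h_far t
      _ ≤ K * (2 * (T ^ (1 - 2 * q) / (2 * q - 1))) := by
          rw [integral_const_mul]
          exact mul_le_mul_of_nonneg_left (integral_compl_Ioc_one_add_sq_rpow_neg_le hq hT) hK

theorem mul_mul_rpow {x w : ℝ} (hx : 0 < x) (hw : 0 < w) (r : ℝ) :
    x * w * (x * w) ^ r = x ^ (r + 1) * w ^ (r + 1) := by
  rw [mul_comm (x * w), ← Real.rpow_add_one (by positivity), Real.mul_rpow hx.le hw.le]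

theorem rpow_div_max_rpow_le_left {w a x r : ℝ} (hw : 0 < w) (ha : 0 < a) (hr : 0 ≤ r + 2) :
    w ^ (r + 1) / max (a * w) x ^ (r + 2) ≤ a ^ (-(r + 2)) * w⁻¹ := by
  calc w ^ (r + 1) / max (a * w) x ^ (r + 2) ≤ w ^ (r + 1) / (a * w) ^ (r + 2) :=
        div_le_div_of_nonneg_left (by positivity) (by positivity)
          (Real.rpow_le_rpow (by positivity) (le_max_left _ _) hr)
    _ = a ^ (-(r + 2)) * w⁻¹ := by
        have hw2 : w ^ (r + 2) = w ^ (r + 1) * w := by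
          rw [← Real.rpow_add_one hw.ne']; ring_nf
        rw [Real.mul_rpow ha.le hw.le, hw2, Real.rpow_neg ha.le]
        field_simp

theorem rpow_div_max_rpow_le_right {w a k r : ℝ} (hw : 0 ≤ w) (hk : 0 < k) (hr : 0 ≤ r + 2) :
    w ^ (r + 1) / max (a * w) k⁻¹ ^ (r + 2) ≤ k ^ (r + 2) * w ^ (r + 1) := by
  calc w ^ (r + 1) / max (a * w) k⁻¹ ^ (r + 2) ≤ w ^ (r + 1) / k⁻¹ ^ (r + 2) :=
        div_le_div_of_nonneg_left (by positivity) (by positivity)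
          (Real.rpow_le_rpow (by positivity) (le_max_right _ _) hr)
    _ = k ^ (r + 2) * w ^ (r + 1) := by rw [Real.inv_rpow hk.le, div_inv_eq_mul, mul_comm]

/-- The modulus of the ridge factor with `|M_c[g](t)|` replaced by `a (1 + t²)^{-γ/2}`,
divided by `a^{r+1}`. -/
def ridgeProfile (γ r a k t : ℝ) : ℝ :=
  ((1 + t ^ 2) ^ (-γ / 2)) ^ (r + 1) / max (a * (1 + t ^ 2) ^ (-γ / 2)) k⁻¹ ^ (r + 2)

section ridgeProfile

variable {γ r a k : ℝ}

theorem one_add_sq_rpow_rpow_sq (t s : ℝ) :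
    (((1 + t ^ 2) ^ (-γ / 2)) ^ s) ^ 2 = (1 + t ^ 2) ^ (-(γ * s)) := by
  rw [← Real.rpow_mul (by positivity), ← Real.rpow_mul_natCast (by positivity)]
  ring_nf

theorem ridgeProfile_nonneg (hk : 0 < k) (t : ℝ) : 0 ≤ ridgeProfile γ r a k t :=
  div_nonneg (by positivity) (Real.rpow_nonneg (le_max_of_le_right (by positivity)) _)

theorem measurable_ridgeProfile : Measurable (ridgeProfile γ r a k) := by
  unfold ridgeProfile; fun_prop

theorem ridgeProfile_sq_le_near (ha : 0 < a) (hk : 0 < k) (hr : 0 ≤ r + 2) (t : ℝ) :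
    ridgeProfile γ r a k t ^ 2 ≤ (a ^ (-(r + 2))) ^ 2 * (1 + t ^ 2) ^ γ := by
  calc ridgeProfile γ r a k t ^ 2 ≤ (a ^ (-(r + 2)) * ((1 + t ^ 2) ^ (-γ / 2))⁻¹) ^ 2 :=
        pow_le_pow_left₀ (ridgeProfile_nonneg hk t)
          (rpow_div_max_rpow_le_left (by positivity) ha hr) 2
    _ = (a ^ (-(r + 2))) ^ 2 * (1 + t ^ 2) ^ γ := by
        rw [mul_pow, ← Real.rpow_neg_one, one_add_sq_rpow_rpow_sq]; ring_nf

theorem ridgeProfile_sq_le_far (hk : 0 < k) (hr : 0 ≤ r + 2) (t : ℝ) :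
    ridgeProfile γ r a k t ^ 2 ≤ (k ^ (r + 2)) ^ 2 * (1 + t ^ 2) ^ (-(γ * (r + 1))) := by
  calc ridgeProfile γ r a k t ^ 2 ≤ (k ^ (r + 2) * ((1 + t ^ 2) ^ (-γ / 2)) ^ (r + 1)) ^ 2 :=
        pow_le_pow_left₀ (ridgeProfile_nonneg hk t)
          (rpow_div_max_rpow_le_right (by positivity) hk hr) 2
    _ = (k ^ (r + 2)) ^ 2 * (1 + t ^ 2) ^ (-(γ * (r + 1))) := by
        rw [mul_pow, one_add_sq_rpow_rpow_sq]

theorem ridgeProfile_sq_eq_far (hk : 0 < k) {t : ℝ} (ht : a * (1 + t ^ 2) ^ (-γ / 2) ≤ k⁻¹) :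
    ridgeProfile γ r a k t ^ 2 = (k ^ (r + 2)) ^ 2 * (1 + t ^ 2) ^ (-(γ * (r + 1))) := by
  rw [ridgeProfile, max_eq_right ht, Real.inv_rpow hk.le, div_inv_eq_mul, mul_pow,
    one_add_sq_rpow_rpow_sq, mul_comm]

theorem integrable_ridgeProfile_sq (hγ : 0 < γ) (hq : 1 < 2 * (γ * (r + 1))) (hk : 0 < k) :
    Integrable fun t => ridgeProfile γ r a k t ^ 2 := by
  have hr : 0 < r + 1 := pos_of_mul_pos_right (by linarith) hγ.le
  refine ((integrable_one_add_sq_rpow_neg hq).const_mul ((k ^ (r + 2)) ^ 2)).mono'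
    (measurable_ridgeProfile.pow_const 2).aestronglyMeasurable (ae_of_all _ fun t => ?_)
  rw [Real.norm_of_nonneg (sq_nonneg _)]
  exact ridgeProfile_sq_le_far hk (by linarith) t

theorem rpow_sq_mul_rpow_one_div_rpow (hγ : 0 < γ) (hk : 0 < k) :
    (k ^ (r + 2)) ^ 2 * (k ^ (1 / γ)) ^ (1 - 2 * (γ * (r + 1))) = k ^ (2 + 1 / γ) := by
  rw [← Real.rpow_mul_natCast hk.le, ← Real.rpow_mul hk.le, ← Real.rpow_add hk]
  congr 1
  field_simp
  ring

theorem integral_ridgeProfile_sq_le (hγ : 0 < γ) (hq : 1 < 2 * (γ * (r + 1))) (ha : 0 < a) :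
    ∃ C, 0 < C ∧ ∀ k, 1 ≤ k → ∫ t, ridgeProfile γ r a k t ^ 2 ≤ C * k ^ (2 + 1 / γ) := by
  have hr : 0 < r + 1 := pos_of_mul_pos_right (by linarith) hγ.le
  set q := γ * (r + 1)
  have hq' : 0 < 2 * q - 1 := by linarith
  refine ⟨2 ^ (γ + 1) * (a ^ (-(r + 2))) ^ 2 + 2 / (2 * q - 1), by positivity,
    fun k hk => ?_⟩
  have hk0 : 0 < k := by linarith
  set T := k ^ (1 / γ) with hT_def
  have hT : 1 ≤ T := Real.one_le_rpow hk (by positivity)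
  have hTγ : T ^ γ = k := by rw [hT_def, one_div, Real.rpow_inv_rpow hk0.le hγ.ne']
  have hnear : T * (1 + T ^ 2) ^ γ ≤ 2 ^ γ * k ^ (2 + 1 / γ) := by
    calc T * (1 + T ^ 2) ^ γ ≤ T * (2 * T ^ 2) ^ γ := by
          gcongr; nlinarith
      _ = 2 ^ γ * k ^ (2 + 1 / γ) := by
          rw [Real.mul_rpow zero_le_two (by positivity), ← Real.rpow_pow_comm (by positivity),
            hTγ, Real.rpow_add hk0, Real.rpow_two, hT_def]
          ring
  calc ∫ t, ridgeProfile γ r a k t ^ 2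
      ≤ 2 * T * ((a ^ (-(r + 2))) ^ 2 * (1 + T ^ 2) ^ γ)
          + (k ^ (r + 2)) ^ 2 * (2 * (T ^ (1 - 2 * q) / (2 * q - 1))) :=
        integral_le_of_le_one_add_sq_rpow (integrable_ridgeProfile_sq hγ hq hk0) (by positivity)
          (by positivity) hγ.le hq (by positivity) (ridgeProfile_sq_le_near ha hk0 (by linarith))
          (ridgeProfile_sq_le_far hk0 (by linarith))
    _ = 2 * (a ^ (-(r + 2))) ^ 2 * (T * (1 + T ^ 2) ^ γ)
          + 2 / (2 * q - 1) * ((k ^ (r + 2)) ^ 2 * T ^ (1 - 2 * q)) := by ring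
    _ ≤ 2 * (a ^ (-(r + 2))) ^ 2 * (2 ^ γ * k ^ (2 + 1 / γ))
          + 2 / (2 * q - 1) * k ^ (2 + 1 / γ) := by
        rw [rpow_sq_mul_rpow_one_div_rpow hγ hk0]
        gcongr
    _ = (2 ^ (γ + 1) * (a ^ (-(r + 2))) ^ 2 + 2 / (2 * q - 1)) * k ^ (2 + 1 / γ) := by
        rw [Real.rpow_add_one two_ne_zero]
        ring

theorem mul_one_add_sq_rpow_le_inv (hγ : 0 < γ) (ha : 0 < a) (hk : 0 < k) {b t : ℝ}
    (hab : a ≤ b) (ht : (b * k) ^ (1 / γ) < t) : a * (1 + t ^ 2) ^ (-γ / 2) ≤ k⁻¹ := by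
  have hbk : 0 < b * k := by nlinarith
  have ht0 : 0 < t := (Real.rpow_pos_of_pos hbk _).trans ht
  have hdecay : (1 + t ^ 2) ^ (-γ / 2) ≤ t ^ (-γ) :=
    calc (1 + t ^ 2) ^ (-γ / 2) ≤ (t ^ 2) ^ (-γ / 2) :=
          Real.rpow_le_rpow_of_nonpos (by positivity) (by linarith) (by linarith)
      _ = t ^ (-γ) := by rw [← Real.rpow_natCast, ← Real.rpow_mul ht0.le]; ring_nf
  calc a * (1 + t ^ 2) ^ (-γ / 2) ≤ b * t ^ (-γ) :=
        mul_le_mul hab hdecay (by positivity) (ha.le.trans hab)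
    _ ≤ b * ((b * k) ^ (1 / γ)) ^ (-γ) := mul_le_mul_of_nonneg_left
        (Real.rpow_le_rpow_of_nonpos (by positivity) ht.le (by linarith)) (ha.le.trans hab)
    _ = k⁻¹ := by
        rw [← Real.rpow_mul hbk.le, show 1 / γ * -γ = -1 by field_simp, Real.rpow_neg_one,
          mul_inv, ← mul_assoc, mul_inv_cancel₀ (by linarith), one_mul]

theorem le_integral_ridgeProfile_sq (hγ : 0 < γ) (hq : 1 < 2 * (γ * (r + 1))) (ha : 0 < a) :
    ∃ c, 0 < c ∧ ∀ k, 1 ≤ k → c * k ^ (2 + 1 / γ) ≤ ∫ t, ridgeProfile γ r a k t ^ 2 := by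
  set q := γ * (r + 1)
  set b := max a 1
  have hb : 0 < b := by positivity
  refine ⟨2 ^ (-q) * b ^ (1 / γ * (1 - 2 * q)) / (2 * q - 1),
    div_pos (by positivity) (by linarith), fun k hk => ?_⟩
  have hk0 : 0 < k := by linarith
  set T := (b * k) ^ (1 / γ) with hT_def
  have hT : 1 ≤ T := Real.one_le_rpow (one_le_mul_of_one_le_of_one_le (le_max_right _ _) hk)
    (by positivity)
  calc 2 ^ (-q) * b ^ (1 / γ * (1 - 2 * q)) / (2 * q - 1) * k ^ (2 + 1 / γ)
      = (k ^ (r + 2)) ^ 2 * (2 ^ (-q) * (T ^ (1 - 2 * q) / (2 * q - 1))) := by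
        rw [← rpow_sq_mul_rpow_one_div_rpow (r := r) hγ hk0, hT_def, Real.mul_rpow hb.le hk0.le,
          Real.mul_rpow (by positivity) (by positivity), ← Real.rpow_mul hb.le]
        ring
    _ ≤ (k ^ (r + 2)) ^ 2 * ∫ t in Ioi T, (1 + t ^ 2) ^ (-q) :=
        mul_le_mul_of_nonneg_left (le_integral_Ioi_one_add_sq_rpow_neg hq hT) (by positivity)
    _ = ∫ t in Ioi T, ridgeProfile γ r a k t ^ 2 := by
        rw [← integral_const_mul]
        refine setIntegral_congr_fun measurableSet_Ioi fun t ht => ?_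
        rw [ridgeProfile_sq_eq_far hk0
          (mul_one_add_sq_rpow_le_inv hγ ha hk0 (le_max_left _ _) ht)]
    _ ≤ ∫ t, ridgeProfile γ r a k t ^ 2 :=
        setIntegral_le_integral (integrable_ridgeProfile_sq hγ hq hk0)
          (ae_of_all _ fun t => sq_nonneg _)

end ridgeProfile

theorem stronglyMeasurable_mellinT {h : ℝ → ℂ} (hh : Measurable h) (c : ℝ) :
    StronglyMeasurable (mellinT c h) :=
  StronglyMeasurable.integral_prod_right' (f := fun p : ℝ × ℝ =>
    (p.2 : ℂ) ^ ((c : ℂ) - 1 + (p.1 : ℂ) * Complex.I) * h p.2)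
    (by fun_prop : Measurable _).stronglyMeasurable

theorem measurable_ridgeR {g : ℝ → ℝ} (hg : Measurable g) (c r ξ k : ℝ) :
    Measurable (ridgeR c g r ξ k) := by
  have hgC : Measurable (toC g) := by unfold toC; fun_prop
  have hM := (stronglyMeasurable_mellinT hgC c).measurable
  unfold ridgeR
  fun_prop

theorem norm_ridgeR (c : ℝ) (g : ℝ → ℝ) (r k t : ℝ) :
    ‖ridgeR c g r 0 k t‖ = ‖mellinT c (toC g) (-t)‖ * ‖mellinT c (toC g) t‖ ^ r /
      max ‖mellinT c (toC g) t‖ k⁻¹ ^ (r + 2) := by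
  have hmax : 0 ≤ max ‖mellinT c (toC g) t‖ k⁻¹ := le_max_of_le_left (norm_nonneg _)
  simp [ridgeR, abs_of_nonneg (Real.rpow_nonneg (norm_nonneg _) _),
    abs_of_nonneg (Real.rpow_nonneg hmax _)]

section AssumptionG1

variable {c : ℝ} {g : ℝ → ℝ} {cg Cg γ r : ℝ}

theorem norm_ridgeR_le (hG1 : AssumptionG1 c g cg Cg γ) (hr : 0 ≤ r) (k t : ℝ) :
    ‖ridgeR c g r 0 k t‖ ≤ Cg ^ (r + 1) * ridgeProfile γ r cg k t := by
  obtain ⟨hcg, hCg, -, hG⟩ := hG1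
  have hw : 0 < (1 + t ^ 2) ^ (-γ / 2) := by positivity
  have hneg := (hG (-t)).2
  rw [neg_sq] at hneg
  rw [norm_ridgeR, ridgeProfile, mul_div_assoc', ← mul_mul_rpow hCg hw]
  refine div_le_div₀ (by positivity)
    (mul_le_mul hneg (Real.rpow_le_rpow (norm_nonneg _) (hG t).2 hr) (by positivity)
      (by positivity))
    (by positivity) (Real.rpow_le_rpow (by positivity) (max_le_max_right _ (hG t).1)
      (by linarith))

theorem le_norm_ridgeR (hG1 : AssumptionG1 c g cg Cg γ) (hr : 0 ≤ r) (k t : ℝ) :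
    cg ^ (r + 1) * ridgeProfile γ r Cg k t ≤ ‖ridgeR c g r 0 k t‖ := by
  obtain ⟨hcg, hCg, -, hG⟩ := hG1
  have hw : 0 < (1 + t ^ 2) ^ (-γ / 2) := by positivity
  have hneg := (hG (-t)).1
  rw [neg_sq] at hneg
  have hM : 0 < ‖mellinT c (toC g) t‖ := lt_of_lt_of_le (by positivity) (hG t).1
  rw [norm_ridgeR, ridgeProfile, mul_div_assoc', ← mul_mul_rpow hcg hw]
  refine div_le_div₀ (by positivity)
    (mul_le_mul hneg (Real.rpow_le_rpow (by positivity) (hG t).1 hr) (by positivity)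
      (by positivity))
    (Real.rpow_pos_of_pos (lt_max_of_lt_left hM) _)
    (Real.rpow_le_rpow (le_max_of_le_left hM.le) (max_le_max_right _ (hG t).2) (by linarith))

theorem integrable_norm_ridgeR_sq (hg : Measurable g) (hG1 : AssumptionG1 c g cg Cg γ)
    (hr : 0 ≤ r) (hq : 1 < 2 * (γ * (r + 1))) {k : ℝ} (hk : 0 < k) :
    Integrable fun t => ‖ridgeR c g r 0 k t‖ ^ 2 := by
  refine ((integrable_ridgeProfile_sq (a := cg) hG1.2.2.1 hq hk).const_mul
    ((Cg ^ (r + 1)) ^ 2)).mono'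
    ((measurable_ridgeR hg c r 0 k).norm.pow_const 2).aestronglyMeasurable
    (ae_of_all _ fun t => ?_)
  rw [Real.norm_of_nonneg (sq_nonneg _), ← mul_pow]
  exact pow_le_pow_left₀ (norm_nonneg _) (norm_ridgeR_le hG1 hr k t) 2

end AssumptionG1

theorem ridgeR_norm_order_general (c : ℝ) (g : ℝ → ℝ) (cg Cg γ r : ℝ)
    (hg : IsDensity g)
    (hG1 : AssumptionG1 c g cg Cg γ)
    (hr : max 0 (γ⁻¹ - 1) < r) :
    ∃ c₁ C₁ : ℝ, 0 < c₁ ∧ 0 < C₁ ∧ ∀ k : ℝ, 1 ≤ k →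
      c₁ * k ^ (2 + 1 / γ) ≤ RnormSq c g r 0 k ∧
        RnormSq c g r 0 k ≤ C₁ * k ^ (2 + 1 / γ) := by
  have ⟨hcg, hCg, hγ, _⟩ := hG1
  have hr0 : 0 ≤ r := (le_max_left _ _).trans hr.le
  have hq : 1 < 2 * (γ * (r + 1)) := by
    have h : γ⁻¹ < r + 1 := by linarith [(le_max_right 0 (γ⁻¹ - 1)).trans_lt hr]
    linarith [(inv_lt_iff_one_lt_mul₀' hγ).mp h]
  obtain ⟨c', hc', hlower⟩ := le_integral_ridgeProfile_sq hγ hq hCg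
  obtain ⟨C, hC, hupper⟩ := integral_ridgeProfile_sq_le hγ hq hcg
  refine ⟨(cg ^ (r + 1)) ^ 2 * c', (Cg ^ (r + 1)) ^ 2 * C, by positivity, by positivity,
    fun k hk => ?_⟩
  have hk0 : 0 < k := by linarith
  have hint := integrable_norm_ridgeR_sq hg.1 hG1 hr0 hq hk0
  constructor
  · calc (cg ^ (r + 1)) ^ 2 * c' * k ^ (2 + 1 / γ)
        ≤ ∫ t, (cg ^ (r + 1)) ^ 2 * ridgeProfile γ r Cg k t ^ 2 := by
          rw [integral_const_mul, mul_assoc]; gcongr; exact hlower k hk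
      _ ≤ RnormSq c g r 0 k :=
          integral_mono ((integrable_ridgeProfile_sq hγ hq hk0).const_mul _) hint fun t => by
            rw [← mul_pow]
            exact pow_le_pow_left₀ (mul_nonneg (by positivity) (ridgeProfile_nonneg hk0 t))
              (le_norm_ridgeR hG1 hr0 k t) 2
  · calc RnormSq c g r 0 k ≤ ∫ t, (Cg ^ (r + 1)) ^ 2 * ridgeProfile γ r cg k t ^ 2 :=
          integral_mono hint ((integrable_ridgeProfile_sq hγ hq hk0).const_mul _) fun t => by
            rw [← mul_pow]
            exact pow_le_pow_left₀ (norm_nonneg _) (norm_ridgeR_le hG1 hr0 k t) 2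
      _ ≤ (Cg ^ (r + 1)) ^ 2 * C * k ^ (2 + 1 / γ) := by
          rw [integral_const_mul, mul_assoc]; gcongr; exact hupper k hk

/-- Under [G1], for `r > max(0, γ⁻¹ − 1)` the squared `L²`-norm of the
ridge factor `R_k = R_{k,0,r}` is of exact order `k^{2+1/γ}`. -/
theorem ridgeR_norm_order (c : ℝ) (g : ℝ → ℝ) (cg Cg γ r : ℝ)
    (hg : IsDensity g) (hg1 : MemL1w c (toC g))
    (hG1 : AssumptionG1 c g cg Cg γ)
    (hr : max 0 (γ⁻¹ - 1) < r) :
    ∃ c₁ C₁ : ℝ, 0 < c₁ ∧ 0 < C₁ ∧ ∀ k : ℝ, 1 ≤ k →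
      c₁ * k ^ (2 + 1 / γ) ≤ RnormSq c g r 0 k ∧
        RnormSq c g r 0 k ≤ C₁ * k ^ (2 + 1 / γ) :=
  ridgeR_norm_order_general c g cg Cg γ r hg hG1 hr

end MultDeconv
end
end

section
/- Let c ∈ ℝ, s, L > 0, let g ∈ L¹((0,∞), x^{c−1}) satisfy [G1] with parameter γ > 0, and let f ∈ L¹((0,∞), x^{c−1}) ∩ L²((0,∞), x^{2c−1}) satisfy ∫_ℝ (1+t²)^s |M_c[f](t)|² dt ≤ L. Then there is a constant C(g, L, s) > 0, depending only on g, L and s, such that for all k ≥ 1, ∫_{G_k} |M_c[f](t)|² dt ≤ C(g, L, s) k^{−2s/γ}, where G_k = {t ∈ ℝ : k^{−1} > |M_c[g](t)|}. -/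
open MeasureTheory Set Filter Finset
open scoped Real NNReal ENNReal Topology

noncomputable section

namespace MultDeconv

/-
On `G_k` the lower bound of [G1] gives `c_g k < (1 + t²)^{γ/2}`, hence
`1 ≤ (c_g k)^{-2s/γ} (1 + t²)^s` there. Inserting this weight and extending the integral from
`G_k` to `ℝ` bounds the bias by `(c_g k)^{-2s/γ} L`.
-/

lemma aestronglyMeasurable_mellinT (c : ℝ) {h : ℝ → ℂ}
    (hh : AEStronglyMeasurable h (volume.restrict (Ioi 0))) :
    AEStronglyMeasurable (mellinT c h) volume :=
  AEStronglyMeasurable.integral_prod_right'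
    (f := fun p : ℝ × ℝ => (p.2 : ℂ) ^ ((c : ℂ) - 1 + (p.1 : ℂ) * Complex.I) * h p.2)
    ((Measurable.aestronglyMeasurable (by fun_prop)).mul hh.comp_snd)

lemma nullMeasurableSet_Gset (c : ℝ) {g : ℝ → ℝ} (hg : Measurable g) (ξ k : ℝ) :
    NullMeasurableSet (Gset c g ξ k) volume :=
  nullMeasurableSet_lt
    (aestronglyMeasurable_mellinT c
      (Complex.measurable_ofReal.comp hg).aestronglyMeasurable).aemeasurable.norm
    (by fun_prop)

lemma mul_lt_rpow_of_mem_Gset {c : ℝ} {g : ℝ → ℝ} {cg γ k t : ℝ} (hk : 0 < k)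
    (hlow : cg * (1 + t ^ 2) ^ (-γ / 2) ≤ ‖mellinT c (toC g) t‖) (ht : t ∈ Gset c g 0 k) :
    cg * k < (1 + t ^ 2) ^ (γ / 2) := by
  have hpos : (0 : ℝ) < (1 + t ^ 2) ^ (γ / 2) := by positivity
  have hlt : cg * ((1 + t ^ 2) ^ (γ / 2))⁻¹ < k⁻¹ := by
    rw [← Real.rpow_neg (by positivity), ← neg_div]
    simpa only [Gset, Real.rpow_zero, mul_one] using hlow.trans_lt ht
  rwa [← div_eq_mul_inv, div_lt_iff₀ hpos, ← div_eq_inv_mul, lt_div_iff₀ hk] at hlt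

lemma one_le_rpow_neg_mul_rpow {a b s γ : ℝ} (ha : 0 < a) (hs : 0 ≤ s) (hγ : 0 < γ)
    (hab : a ≤ b ^ (γ / 2)) (hb : 0 ≤ b) :
    1 ≤ a ^ (-(2 * s / γ)) * b ^ s := by
  have hpow : a ^ (2 * s / γ) ≤ b ^ s := by
    calc a ^ (2 * s / γ) ≤ (b ^ (γ / 2)) ^ (2 * s / γ) := by gcongr
      _ = b ^ s := by rw [← Real.rpow_mul hb]; congr 1; field_simp
  calc (1 : ℝ) = a ^ (-(2 * s / γ)) * a ^ (2 * s / γ) := by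
        rw [← Real.rpow_add ha, neg_add_cancel, Real.rpow_zero]
    _ ≤ a ^ (-(2 * s / γ)) * b ^ s := by gcongr

lemma setIntegral_le_mul_integral_of_one_le_mul {α : Type*} [MeasurableSpace α] {μ : Measure α}
    {s : Set α} (hs : NullMeasurableSet s μ) {F w : α → ℝ} {B : ℝ} (hB : 0 ≤ B)
    (hF : ∀ x, 0 ≤ F x) (hw : ∀ x, 0 ≤ w x) (hwF : Integrable (fun x => w x * F x) μ)
    (hone : ∀ x ∈ s, 1 ≤ B * w x) :
    ∫ x in s, F x ∂μ ≤ B * ∫ x, w x * F x ∂μ := by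
  have hBwF : Integrable (fun x => B * (w x * F x)) μ := hwF.const_mul B
  calc ∫ x in s, F x ∂μ ≤ ∫ x in s, B * (w x * F x) ∂μ := by
        refine integral_mono_of_nonneg (.of_forall hF) hBwF.integrableOn ?_
        filter_upwards [ae_restrict_mem₀ hs] with x hx
        calc F x ≤ (B * w x) * F x := le_mul_of_one_le_left (hF x) (hone x hx)
          _ = B * (w x * F x) := mul_assoc _ _ _
    _ ≤ ∫ x, B * (w x * F x) ∂μ :=
        setIntegral_le_integral hBwF (.of_forall fun x => by have := hw x; have := hF x; positivity)
    _ = B * ∫ x, w x * F x ∂μ := integral_const_mul B _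

theorem sobolev_bias_bound_general (c s L : ℝ) (hs : 0 < s) (hL : 0 < L)
    (g : ℝ → ℝ) (cg Cg γ : ℝ)
    (hg : IsDensity g)
    (hG1 : AssumptionG1 c g cg Cg γ) :
    ∃ C : ℝ, 0 < C ∧ ∀ f : ℝ → ℂ, MemL1w c f → MemL2w c f →
      Integrable (fun t : ℝ => (1 + t ^ 2) ^ s * ‖mellinT c f t‖ ^ 2) →
      (∫ t : ℝ, (1 + t ^ 2) ^ s * ‖mellinT c f t‖ ^ 2) ≤ L →
      ∀ k : ℝ, 1 ≤ k →
        (∫ t in Gset c g 0 k, ‖mellinT c f t‖ ^ 2) ≤ C * k ^ (-(2 * s / γ)) := by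
  obtain ⟨hcg, -, hγ, hbound⟩ := hG1
  refine ⟨cg ^ (-(2 * s / γ)) * L, by positivity, fun f _ _ hInt hIntL k hk => ?_⟩
  have hk0 : 0 < k := one_pos.trans_le hk
  calc (∫ t in Gset c g 0 k, ‖mellinT c f t‖ ^ 2)
      ≤ (cg * k) ^ (-(2 * s / γ)) * ∫ t, (1 + t ^ 2) ^ s * ‖mellinT c f t‖ ^ 2 :=
        setIntegral_le_mul_integral_of_one_le_mul (nullMeasurableSet_Gset c hg.1 0 k)
          (by positivity) (fun _ => by positivity) (fun _ => by positivity) hInt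
          fun t ht => one_le_rpow_neg_mul_rpow (by positivity) hs.le hγ
            (mul_lt_rpow_of_mem_Gset hk0 (hbound t).1 ht).le (by positivity)
    _ ≤ (cg * k) ^ (-(2 * s / γ)) * L := by gcongr
    _ = cg ^ (-(2 * s / γ)) * L * k ^ (-(2 * s / γ)) := by
        rw [Real.mul_rpow hcg.le hk0.le]; ring

/-- Under [G1], for `f` in the Mellin--Sobolev ball of radius `L` the
bias term satisfies `∫_{G_k}|M_c[f]|² ≤ C(g,L,s) k^{−2s/γ}` for all `k ≥ 1`. -/
theorem sobolev_bias_bound (c s L : ℝ) (hs : 0 < s) (hL : 0 < L)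
    (g : ℝ → ℝ) (cg Cg γ : ℝ)
    (hg : IsDensity g) (hg1 : MemL1w c (toC g))
    (hG1 : AssumptionG1 c g cg Cg γ) :
    ∃ C : ℝ, 0 < C ∧ ∀ f : ℝ → ℂ, MemL1w c f → MemL2w c f →
      Integrable (fun t : ℝ => (1 + t ^ 2) ^ s * ‖mellinT c f t‖ ^ 2) →
      (∫ t : ℝ, (1 + t ^ 2) ^ s * ‖mellinT c f t‖ ^ 2) ≤ L →
      ∀ k : ℝ, 1 ≤ k →
        (∫ t in Gset c g 0 k, ‖mellinT c f t‖ ^ 2) ≤ C * k ^ (-(2 * s / γ)) :=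
  sobolev_bias_bound_general c s L hs hL g cg Cg γ hg hG1

end MultDeconv
end
end

section
/- (Lemma, deviation of the empirical penalty) Under the assumptions of Theorem 3 (in particular σ_c := E(Y₁^{2(c−1)}) < ∞ and E(Y₁^{4(c−1)}) < ∞), it holds that E[ sup_{k∈𝒦_n} (V(k) − V̂(k))₊ ] ≤ C/n, where V(k) := σ_c‖R_k‖²_{L²(ℝ)}/n, V̂(k) := 2σ̂_c‖R_k‖²_{L²(ℝ)}/n with σ̂_c := n^{−1}Σ_{j=1}^n Y_j^{2(c−1)}, 𝒦_n := {k ∈ ℕ : ‖R_k‖²_{L²(ℝ)} ≤ n}, and C > 0 depends only on σ_c and E(Y₁^{4(c−1)}); in fact E[(σ_c − 2σ̂_c)₊] ≤ 4·Var(σ̂_c)/σ_c. -/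
/-!
Every `k ∈ 𝒦_n` has `‖R_k‖² ≤ n`, so `(V(k) - V̂(k))₊ = (σ_c - 2σ̂_c)₊ · ‖R_k‖²/n` is at most
`(σ_c - 2σ̂_c)₊` uniformly in `k`. For `s > 0` one has `(s - 2t)₊ ≤ 4(t - s)²/s` pointwise, and
`σ̂_c` is the empirical mean of `Y^{2(c-1)}` over an i.i.d. sample, with expectation `σ_c` and
variance `Var(Y^{2(c-1)})/n ≤ E(Y^{4(c-1)})/n`. Both moments are positive since `Y > 0` almost
surely; that the law of `Y` has total mass one follows from Tonelli and the substitution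
`y ↦ y/x` in the multiplicative convolution.
-/

open MeasureTheory Set Filter Finset
open scoped Real NNReal ENNReal Topology

noncomputable section

namespace MultDeconv

open ProbabilityTheory

section EmpiricalMean

variable {α : Type*} {φ : α → ℝ} {n : ℕ}

def empiricalMean (φ : α → ℝ) {n : ℕ} (y : Fin n → α) : ℝ :=
  (n : ℝ)⁻¹ * ∑ j, φ (y j)

lemma empiricalMean_eq_smul_sum :
    (empiricalMean φ : (Fin n → α) → ℝ) = (n : ℝ)⁻¹ • ∑ j, fun y : Fin n → α => φ (y j) := by
  ext y
  simp [empiricalMean]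

variable [MeasurableSpace α] {μ : Measure α} [IsProbabilityMeasure μ]

lemma memLp_empiricalMean (hφ : MemLp φ 2 μ) :
    MemLp (empiricalMean φ : (Fin n → α) → ℝ) 2 (Measure.pi fun _ => μ) := by
  rw [empiricalMean_eq_smul_sum]
  exact (memLp_finsetSum' _ fun j _ =>
    hφ.comp_measurePreserving (measurePreserving_eval _ j)).const_smul _

lemma integral_empiricalMean (hn : 0 < n) (hφ : Integrable φ μ) :
    ∫ y, empiricalMean φ y ∂(Measure.pi fun _ : Fin n => μ) = ∫ x, φ x ∂μ := by
  simp only [empiricalMean]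
  rw [integral_const_mul, integral_finsetSum _ fun j _ => integrable_comp_eval hφ]
  simp only [integral_comp_eval (μ := fun _ => μ) hφ.aestronglyMeasurable, Finset.sum_const,
    Finset.card_univ, Fintype.card_fin, nsmul_eq_mul]
  field_simp

lemma variance_empiricalMean (hφ : MemLp φ 2 μ) :
    Var[empiricalMean φ; Measure.pi fun _ : Fin n => μ] = Var[φ; μ] / n := by
  rw [empiricalMean_eq_smul_sum, variance_smul, variance_sum_pi fun _ => hφ]
  simp only [Finset.sum_const, Finset.card_univ, Fintype.card_fin, nsmul_eq_mul]
  rcases n.eq_zero_or_pos with rfl | hn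
  · simp
  · field_simp

end EmpiricalMean

lemma max_sub_two_mul_le {s t : ℝ} (hs : 0 < s) :
    max (s - 2 * t) 0 ≤ 4 * (t - s) ^ 2 / s := by
  refine max_le ?_ (by positivity)
  rw [le_div_iff₀ hs]
  -- `4(t - s)² - s(s - 2t) = (2t - 3s/2)² + 3s²/4`
  nlinarith [sq_nonneg (4 * t - 3 * s)]

lemma integral_max_sub_two_mul_le {Ω : Type*} [MeasurableSpace Ω] {P : Measure Ω}
    [IsFiniteMeasure P] {X : Ω → ℝ} (hX : MemLp X 2 P) {s : ℝ} (hs : 0 < s) :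
    ∫ ω, max (s - 2 * X ω) 0 ∂P ≤ 4 * (∫ ω, (X ω - s) ^ 2 ∂P) / s := by
  have hsq : Integrable (fun ω => (X ω - s) ^ 2) P := (hX.sub (memLp_const s)).integrable_sq
  calc ∫ ω, max (s - 2 * X ω) 0 ∂P ≤ ∫ ω, 4 / s * (X ω - s) ^ 2 ∂P :=
        integral_mono_of_nonneg (ae_of_all _ fun _ => le_max_right _ _) (hsq.const_mul _)
          (ae_of_all _ fun _ => (max_sub_two_mul_le hs).trans_eq (by ring))
    _ = 4 * (∫ ω, (X ω - s) ^ 2 ∂P) / s := by rw [integral_const_mul]; ring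

lemma max_mul_le_max_zero {a t : ℝ} (ht₀ : 0 ≤ t) (ht₁ : t ≤ 1) :
    max (a * t) 0 ≤ max a 0 := by
  rcases le_total a 0 with ha | ha
  · simp [mul_nonpos_of_nonpos_of_nonneg ha ht₀, ha]
  · exact max_le_max_right 0 (mul_le_of_le_one_right ha ht₁)

section PositiveMoments

variable {μ : Measure ℝ}

lemma integral_rpow_pos [NeZero μ] (hpos : ∀ᵐ y ∂μ, 0 < y) {a : ℝ}
    (h : Integrable (fun y => y ^ a) μ) : 0 < ∫ y, y ^ a ∂μ := by
  rw [integral_pos_iff_support_of_nonneg_ae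
    (hpos.mono fun y hy => (Real.rpow_pos_of_pos hy a).le) h, pos_iff_ne_zero]
  intro h0
  have hfalse : ∀ᵐ y ∂μ, False := by
    filter_upwards [hpos, measure_eq_zero_iff_ae_notMem.1 h0] with y hy hy0
    exact hy0 (Real.rpow_pos_of_pos hy a).ne'
  exact NeZero.ne μ (ae_eq_bot.1 (Filter.eventually_false_iff_eq_bot.1 hfalse))

lemma rpow_two_mul_ae_eq_sq (hpos : ∀ᵐ y ∂μ, 0 < y) (a : ℝ) :
    (fun y => y ^ (2 * a)) =ᵐ[μ] fun y => (y ^ a) ^ 2 := by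
  filter_upwards [hpos] with y hy
  rw [mul_comm, ← Real.rpow_mul_natCast hy.le, Nat.cast_ofNat]

lemma memLp_two_rpow (hpos : ∀ᵐ y ∂μ, 0 < y) {a : ℝ}
    (h : Integrable (fun y => y ^ (2 * a)) μ) : MemLp (fun y => y ^ a) 2 μ :=
  (memLp_two_iff_integrable_sq (measurable_id.pow_const a).aestronglyMeasurable).2
    (h.congr (rpow_two_mul_ae_eq_sq hpos a))

lemma variance_rpow_le [IsProbabilityMeasure μ] (hpos : ∀ᵐ y ∂μ, 0 < y) (a : ℝ) :
    Var[fun y => y ^ a; μ] ≤ ∫ y, y ^ (2 * a) ∂μ :=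
  (variance_le_expectation_sq (measurable_id.pow_const a).aestronglyMeasurable).trans_eq
    (integral_congr_ae (rpow_two_mul_ae_eq_sq hpos a)).symm

end PositiveMoments

lemma lintegral_Ioi_comp_div {x : ℝ} (hx : 0 < x) (h : ℝ → ℝ≥0∞) :
    ∫⁻ y in Ioi (0 : ℝ), h (y / x) = ENNReal.ofReal x * ∫⁻ y in Ioi (0 : ℝ), h y := by
  let e := MeasurableEquiv.mulRight₀ x⁻¹ (inv_ne_zero hx.ne')
  have he : e ⁻¹' Ioi (0 : ℝ) = Ioi (0 : ℝ) := by
    ext y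
    simp [e, hx]
  have hmap : Measure.map e volume = ENNReal.ofReal x • volume := by
    change Measure.map (· * x⁻¹) volume = _
    simpa [abs_of_pos hx] using Real.map_volume_mul_right (inv_ne_zero hx.ne')
  calc ∫⁻ y in Ioi (0 : ℝ), h (y / x) = ∫⁻ y in e ⁻¹' Ioi (0 : ℝ), h (e y) := by
        rw [he]; simp [e, div_eq_mul_inv]
    _ = ∫⁻ z in Ioi (0 : ℝ), h z ∂(Measure.map e volume) := by
        rw [e.restrict_map, lintegral_map_equiv]
    _ = ENNReal.ofReal x * ∫⁻ y in Ioi (0 : ℝ), h y := by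
        rw [hmap, Measure.restrict_smul, lintegral_smul_measure, smul_eq_mul]

lemma IsDensity.lintegral_eq_one {f : ℝ → ℝ} (hf : IsDensity f) :
    ∫⁻ x in Ioi (0 : ℝ), ENNReal.ofReal (f x) = 1 := by
  have hint : IntegrableOn f (Ioi (0 : ℝ)) :=
    Integrable.of_integral_ne_zero (hf.2.2.2 ▸ one_ne_zero)
  rw [← ofReal_integral_eq_lintegral_ofReal hint (ae_of_all _ hf.2.1), hf.2.2.2,
    ENNReal.ofReal_one]

section LawY

variable {f g : ℝ → ℝ}

lemma measurable_mConvR_kernel (hf : Measurable f) (hg : Measurable g) :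
    Measurable (Function.uncurry fun y x : ℝ => f (y / x) * g x / x) :=
  ((hf.comp (measurable_fst.div measurable_snd)).mul (hg.comp measurable_snd)).div
    measurable_snd

lemma lintegral_mConvR_kernel (hf : IsDensity f) (hg : IsDensity g) :
    ∫⁻ y in Ioi (0 : ℝ), ∫⁻ x in Ioi (0 : ℝ),
      ENNReal.ofReal (f (y / x) * g x / x) = 1 := by
  rw [lintegral_lintegral_swap (measurable_mConvR_kernel hf.1 hg.1).ennreal_ofReal.aemeasurable,
    ← hg.lintegral_eq_one]
  refine setLIntegral_congr_fun measurableSet_Ioi fun x (hx : 0 < x) => ?_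
  simp_rw [mul_div_assoc, ENNReal.ofReal_mul (hf.2.1 _)]
  rw [lintegral_mul_const' _ _ ENNReal.ofReal_ne_top,
    lintegral_Ioi_comp_div hx (fun z => ENNReal.ofReal (f z)),
    hf.lintegral_eq_one, mul_one, ← ENNReal.ofReal_mul hx.le, mul_div_cancel₀ _ hx.ne']

lemma ofReal_mConvR_ae_eq (hf : IsDensity f) (hg : IsDensity g) :
    (fun y => ENNReal.ofReal (mConvR f g y)) =ᵐ[volume.restrict (Ioi (0 : ℝ))]
      fun y => ∫⁻ x in Ioi (0 : ℝ), ENNReal.ofReal (f (y / x) * g x / x) := by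
  have hfin : ∀ᵐ y ∂(volume.restrict (Ioi (0 : ℝ))),
      ∫⁻ x in Ioi (0 : ℝ), ENNReal.ofReal (f (y / x) * g x / x) < ⊤ := by
    refine ae_lt_top' ?_ (by rw [lintegral_mConvR_kernel hf hg]; exact ENNReal.one_ne_top)
    exact (measurable_mConvR_kernel hf.1 hg.1).ennreal_ofReal.lintegral_prod_right'.aemeasurable
  filter_upwards [hfin] with y hy
  have hnn : 0 ≤ᵐ[volume.restrict (Ioi (0 : ℝ))] fun x => f (y / x) * g x / x := by
    filter_upwards [ae_restrict_mem measurableSet_Ioi] with x (hx : 0 < x)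
    exact div_nonneg (mul_nonneg (hf.2.1 _) (hg.2.1 _)) hx.le
  have hmeas :
      AEStronglyMeasurable (fun x => f (y / x) * g x / x) (volume.restrict (Ioi (0 : ℝ))) :=
    (measurable_mConvR_kernel hf.1 hg.1).of_uncurry_left.aestronglyMeasurable
  rw [mConvR, integral_eq_lintegral_of_nonneg_ae hnn hmeas, ENNReal.ofReal_toReal hy.ne]

lemma isProbabilityMeasure_lawY (hf : IsDensity f) (hg : IsDensity g) :
    IsProbabilityMeasure (lawY f g) := by
  constructor
  rw [lawY, withDensity_apply _ MeasurableSet.univ, Measure.restrict_univ,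
    lintegral_congr_ae (ofReal_mConvR_ae_eq hf hg), lintegral_mConvR_kernel hf hg]

lemma ae_lawY_pos (f g : ℝ → ℝ) : ∀ᵐ y ∂(lawY f g), 0 < y :=
  (withDensity_absolutelyContinuous _ _).ae_le (ae_restrict_mem measurableSet_Ioi)

end LawY

lemma iSup_penalty_gap_le {c r : ℝ} {f g : ℝ → ℝ} {n : ℕ} (hn : 0 < n)
    (y : Fin n → ℝ) :
    ⨆ k ∈ Kn c g r n, max (Vfun c f g r n k - Vhat c g r y k) 0 ≤
      max (sigmaC c f g - 2 * sigmaHat c y) 0 := by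
  refine Real.iSup_le (fun k => Real.iSup_le (fun hk => ?_) (le_max_right _ _)) (le_max_right _ _)
  have hR : 0 ≤ RnormSq c g r 0 k := integral_nonneg fun _ => sq_nonneg _
  have hgap : Vfun c f g r n k - Vhat c g r y k =
      (sigmaC c f g - 2 * sigmaHat c y) * (RnormSq c g r 0 k / n) := by
    simp only [Vfun, Vhat]
    ring
  rw [hgap]
  exact max_mul_le_max_zero (by positivity) ((div_le_one (by positivity)).2 hk.2)

lemma integral_iSup_penalty_gap_le {c r : ℝ} {f g : ℝ → ℝ} {n : ℕ} (hn : 0 < n)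
    {P : Measure (Fin n → ℝ)} [IsFiniteMeasure P] (hσHat : Integrable (sigmaHat c) P) :
    ∫ y, ⨆ k ∈ Kn c g r n, max (Vfun c f g r n k - Vhat c g r y k) 0 ∂P ≤
      ∫ y, max (sigmaC c f g - 2 * sigmaHat c y) 0 ∂P :=
  integral_mono_of_nonneg
    (ae_of_all _ fun _ => Real.iSup_nonneg fun _ => Real.iSup_nonneg fun _ => le_max_right _ _)
    ((integrable_const _).sub (hσHat.const_mul 2)).pos_part
    (ae_of_all _ (iSup_penalty_gap_le hn))

theorem penalty_deviation_general (c : ℝ) (f g : ℝ → ℝ) (r : ℝ)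
    (hf : IsDensity f) (hg : IsDensity g)
    (hσ4 : Integrable (fun y => y ^ (4 * (c - 1))) (lawY f g)) :
    ∃ C : ℝ, 0 < C ∧ ∀ n : ℕ, 0 < n →
      ((∫ y, (⨆ k ∈ Kn c g r n,
          max (Vfun c f g r n k - Vhat c g r y k) 0) ∂(sampleLaw n f g)) ≤ C / n) ∧
      (∫ y, max (sigmaC c f g - 2 * sigmaHat c y) 0 ∂(sampleLaw n f g)) ≤
        4 * (∫ y, (sigmaHat c y - ∫ y', sigmaHat c y' ∂(sampleLaw n f g)) ^ 2
              ∂(sampleLaw n f g)) / sigmaC c f g := by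
  have := isProbabilityMeasure_lawY hf hg
  have hpos := ae_lawY_pos f g
  have h4 : 4 * (c - 1) = 2 * (2 * (c - 1)) := by ring
  rw [h4] at hσ4
  have hφ : MemLp (fun y => y ^ (2 * (c - 1))) 2 (lawY f g) := memLp_two_rpow hpos hσ4
  have hσ : 0 < sigmaC c f g := integral_rpow_pos hpos (hφ.integrable one_le_two)
  set m₄ := ∫ y, y ^ (2 * (2 * (c - 1))) ∂lawY f g
  have hm₄ : 0 < m₄ := integral_rpow_pos hpos hσ4
  refine ⟨4 * m₄ / sigmaC c f g, by positivity, fun n hn => ?_⟩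
  have : IsProbabilityMeasure (sampleLaw n f g) := by unfold sampleLaw; infer_instance
  -- `sigmaHat c` is definitionally `empiricalMean (· ^ (2 * (c - 1)))`
  have hσHat : MemLp (sigmaHat c) 2 (sampleLaw n f g) := memLp_empiricalMean hφ
  have hmean : ∫ y, sigmaHat c y ∂sampleLaw n f g = sigmaC c f g :=
    integral_empiricalMean hn (hφ.integrable one_le_two)
  have hvar :
      ∫ y, (sigmaHat c y - ∫ y', sigmaHat c y' ∂sampleLaw n f g) ^ 2 ∂sampleLaw n f g ≤
        m₄ / n := by
    rw [← variance_eq_integral hσHat.aemeasurable]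
    refine (variance_empiricalMean hφ).trans_le ?_
    gcongr
    exact variance_rpow_le hpos _
  have hdev : ∫ y, max (sigmaC c f g - 2 * sigmaHat c y) 0 ∂sampleLaw n f g ≤
      4 * (∫ y, (sigmaHat c y - ∫ y', sigmaHat c y' ∂sampleLaw n f g) ^ 2
        ∂sampleLaw n f g) / sigmaC c f g := by
    rw [hmean]
    exact integral_max_sub_two_mul_le hσHat hσ
  refine ⟨?_, hdev⟩
  calc ∫ y, ⨆ k ∈ Kn c g r n, max (Vfun c f g r n k - Vhat c g r y k) 0 ∂sampleLaw n f g
      ≤ ∫ y, max (sigmaC c f g - 2 * sigmaHat c y) 0 ∂sampleLaw n f g :=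
        integral_iSup_penalty_gap_le hn (hσHat.integrable one_le_two)
    _ ≤ 4 * (m₄ / n) / sigmaC c f g :=
        hdev.trans (by gcongr)
    _ = 4 * m₄ / sigmaC c f g / n := by ring

/-- deviation of the empirical penalty. -/
theorem penalty_deviation (c : ℝ) (f g : ℝ → ℝ) (r : ℝ)
    (hf : IsDensity f) (hg : IsDensity g)
    (hσ : Integrable (fun y => y ^ (2 * (c - 1))) (lawY f g))
    (hσ4 : Integrable (fun y => y ^ (4 * (c - 1))) (lawY f g)) :
    ∃ C : ℝ, 0 < C ∧ ∀ n : ℕ, 0 < n →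
      ((∫ y, (⨆ k ∈ Kn c g r n,
          max (Vfun c f g r n k - Vhat c g r y k) 0) ∂(sampleLaw n f g)) ≤ C / n) ∧
      (∫ y, max (sigmaC c f g - 2 * sigmaHat c y) 0 ∂(sampleLaw n f g)) ≤
        4 * (∫ y, (sigmaHat c y - ∫ y', sigmaHat c y' ∂(sampleLaw n f g)) ^ 2
              ∂(sampleLaw n f g)) / sigmaC c f g :=
  penalty_deviation_general c f g r hf hg hσ4

end MultDeconv
end
end
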